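/- The infinity series is recurrent: every block that occurs, occurs infinitely often. Precisely, for every N ≥ 1 and every t ≥ 0, s(5·2^{N+t} + i) = s(i) for all 0 ≤ i < 2^N. -/
import Mathlib


def s : ℕ → ℤ
  | 0 => 0
  | n + 1 =>
    if (n + 1) % 2 = 0 then -s ((n + 1) / 2)
    else s (n / 2) + 1
decreasing_by all_goals omega

lemma s_even (n : ℕ) : s (2 * n) = -s n := by
  cases n with
  | zero => simp [s]
  | succ m =>
    rw [show 2 * (m + 1) = (2 * m + 1) + 1 by ring, s]
    have h : (2 * m + 1 + 1) % 2 = 0 := by omega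
    rw [if_pos h]
    have h2 : (2 * m + 1 + 1) / 2 = m + 1 := by omega
    rw [h2]

lemma s_odd (n : ℕ) : s (2 * n + 1) = s n + 1 := by
  rw [show 2 * n + 1 = (2 * n) + 1 from rfl, s]
  have h : ¬ (2 * n + 1) % 2 = 0 := by omega
  rw [if_neg h]
  congr 2
  omega

lemma s_key (a b : ℕ) (h : s a = s b) :
    ∀ k, ∀ i < 2 ^ k, s (2 ^ k * a + i) = s (2 ^ k * b + i) := by
  intro k
  induction k with
  | zero => intro i hi; interval_cases i <;> simpa using h
  | succ k ih =>
    intro i hi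
    rcases Nat.even_or_odd i with ⟨j, hj⟩ | ⟨j, hj⟩
    · have hj2 : j < 2 ^ k := by
        have : 2 ^ (k + 1) = 2 * 2 ^ k := by ring
        omega
      have e1 : 2 ^ (k + 1) * a + i = 2 * (2 ^ k * a + j) := by ring_nf; omega
      have e2 : 2 ^ (k + 1) * b + i = 2 * (2 ^ k * b + j) := by ring_nf; omega
      rw [e1, e2, s_even, s_even, ih j hj2]
    · have hj2 : j < 2 ^ k := by
        have : 2 ^ (k + 1) = 2 * 2 ^ k := by ring
        omega
      have e1 : 2 ^ (k + 1) * a + i = 2 * (2 ^ k * a + j) + 1 := by ring_nf; omega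
      have e2 : 2 ^ (k + 1) * b + i = 2 * (2 ^ k * b + j) + 1 := by ring_nf; omega
      rw [e1, e2, s_odd, s_odd, ih j hj2]

lemma s_five (t : ℕ) : s (5 * 2 ^ t) = 0 := by
  induction t with
  | zero => show s 5 = 0; rw [show (5:ℕ) = 2*2+1 from rfl, s_odd, show (2:ℕ) = 2*1 from rfl, s_even, show (1:ℕ) = 2*0+1 from rfl, s_odd]; simp [s]
  | succ t ih =>
    have : 5 * 2 ^ (t + 1) = 2 * (5 * 2 ^ t) := by ring
    rw [this, s_even, ih, neg_zero]

theorem stmt18 (N : ℕ) (hN : 1 ≤ N) (t : ℕ) :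
    ∀ i < 2 ^ N, s (5 * 2 ^ (N + t) + i) = s i := by
  intro i hi
  have h0 : s (5 * 2 ^ t) = s 0 := by rw [s_five]; simp [s]
  have := s_key (5 * 2 ^ t) 0 h0 N i hi
  have e : 5 * 2 ^ (N + t) = 2 ^ N * (5 * 2 ^ t) := by rw [pow_add]; ring
  rw [e, this, Nat.mul_zero, Nat.zero_add]
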